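/- arXiv:1804.03768 — 9 statements merged into one kernel-verified Lean document; each statement's English description precedes it below -/
import Mathlib

section
/- If a permutation array A on n symbols has minimum Hamming distance at least n-k+1 and |A| = n!/(n-k)!, then A is sharply k-transitive; conversely a sharply k-transitive set of permutations on n symbols has size n!/(n-k)! and pairwise Hamming distance at least n-k+1. -/
/-- Hamming distance between two permutations. -/
noncomputable def hd {Ω : Type*} (π σ : Equiv.Perm Ω) : ℕ :=
  Set.ncard {x | π x ≠ σ x}

/-- `A` is sharply `k`-transitive: any injective `k`-tuple is mapped to any
injective `k`-tuple by a unique element of `A`. -/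
def SharplyTransitive {Ω : Type*} (k : ℕ) (A : Finset (Equiv.Perm Ω)) : Prop :=
  ∀ x y : Fin k → Ω, Function.Injective x → Function.Injective y →
    ∃! g, g ∈ A ∧ ∀ i, g (x i) = y i

lemma hd_add_agree {Ω : Type*} [Fintype Ω] (π σ : Equiv.Perm Ω) :
    hd π σ + Set.ncard {x | π x = σ x} = Fintype.card Ω := by
  have h : {x | π x ≠ σ x} = {x | π x = σ x}ᶜ := by ext x; simp
  rw [hd, h, ← Nat.card_eq_fintype_card, ← Set.ncard_add_ncard_compl {x | π x = σ x},
    Nat.add_comm]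

lemma ncard_range {Ω : Type*} {k : ℕ} {x : Fin k → Ω} (hx : Function.Injective x) :
    (Set.range x).ncard = k := by
  rw [← Nat.card_coe_set_eq, Nat.card_congr (Equiv.ofInjective x hx).symm, Nat.card_eq_fintype_card,
    Fintype.card_fin]

theorem stmt0 {Ω : Type*} [Fintype Ω] (k : ℕ) (hk : k ≤ Fintype.card Ω)
    (A : Finset (Equiv.Perm Ω)) :
    ((∀ π ∈ A, ∀ σ ∈ A, π ≠ σ → hd π σ ≥ Fintype.card Ω - k + 1) ∧
        A.card = (Fintype.card Ω).factorial / (Fintype.card Ω - k).factorial) ↔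
      SharplyTransitive k A := by
  classical
  set n := Fintype.card Ω with hn
  have hcardEmb : Fintype.card (Fin k ↪ Ω) = n.factorial / (n - k).factorial := by
    rw [Fintype.card_embedding_eq, Fintype.card_fin, Nat.descFactorial_eq_div hk]
  -- distinct perms agreeing on k points contradict the distance bound
  have agree_le : ∀ (π σ : Equiv.Perm Ω), hd π σ ≥ n - k + 1 →
      Set.ncard {x | π x = σ x} < k := by
    intro π σ hdist
    have h1 := hd_add_agree π σ
    rw [← hn] at h1
    omega
  constructor
  · rintro ⟨hdist, hcard⟩
    -- the evaluation map on any injective tuple is injective on A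
    have hinj : ∀ (x : Fin k → Ω), Function.Injective x →
        ∀ π ∈ A, ∀ σ ∈ A, (∀ i, π (x i) = σ (x i)) → π = σ := by
      intro x hx π hπ σ hσ hag
      by_contra hne
      have h1 := agree_le π σ (hdist π hπ σ hσ hne)
      have h2 : Set.range x ⊆ {z | π z = σ z} := by
        rintro _ ⟨i, rfl⟩; exact hag i
      have h3 := Set.ncard_le_ncard h2 (Set.toFinite _)
      rw [ncard_range hx] at h3
      omega
    intro x y hx hy
    -- map A into embeddings via evaluation at x
    have hxemb : Function.Injective fun g : A => (⟨(g : Equiv.Perm Ω) ∘ x,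
        (g : Equiv.Perm Ω).injective.comp hx⟩ : Fin k ↪ Ω) := by
      rintro ⟨g, hg⟩ ⟨g', hg'⟩ h
      have : ∀ i, g (x i) = g' (x i) := fun i =>
        congrFun (congrArg (fun e : Fin k ↪ Ω => (e : Fin k → Ω)) h) i
      exact Subtype.ext (hinj x hx g hg g' hg' this)
    have hbij : Function.Bijective fun g : A => (⟨(g : Equiv.Perm Ω) ∘ x,
        (g : Equiv.Perm Ω).injective.comp hx⟩ : Fin k ↪ Ω) := by
      rw [Fintype.bijective_iff_injective_and_card]
      refine ⟨hxemb, ?_⟩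
      rw [Fintype.card_coe, hcard, hcardEmb]
    obtain ⟨⟨g, hg⟩, hgy⟩ := hbij.surjective ⟨y, hy⟩
    refine ⟨g, ⟨hg, fun i => ?_⟩, ?_⟩
    · exact DFunLike.congr_fun hgy i
    · rintro g' ⟨hg', hg'y⟩
      refine hinj x hx g' hg' g hg fun i => ?_
      exact (hg'y i).trans (DFunLike.congr_fun hgy i).symm
  · intro hST
    have huniq : ∀ (x : Fin k → Ω), Function.Injective x →
        ∀ π ∈ A, ∀ σ ∈ A, (∀ i, π (x i) = σ (x i)) → π = σ := by
      intro x hx π hπ σ hσ hag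
      obtain ⟨g, -, hu⟩ := hST x (fun i => σ (x i)) hx (σ.injective.comp hx)
      exact (hu π ⟨hπ, hag⟩).trans (hu σ ⟨hσ, fun i => rfl⟩).symm
    constructor
    · intro π hπ σ hσ hne
      by_contra hlt
      push_neg at hlt
      have h1 := hd_add_agree π σ
      have hk' : k ≤ Set.ncard {x | π x = σ x} := by omega
      -- pick k agreement points
      set S : Finset Ω := {x | π x = σ x}.toFinset with hS
      have hScard : S.card = Set.ncard {x | π x = σ x} := by
        rw [hS, Set.ncard_eq_toFinset_card']
      obtain ⟨t, hts, htcard⟩ := Finset.exists_subset_card_eq (hScard ▸ hk')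
      set x : Fin k → Ω := fun i => ((t.equivFinOfCardEq htcard).symm i : Ω) with hxdef
      have hx : Function.Injective x := by
        intro i j h
        exact (t.equivFinOfCardEq htcard).symm.injective (Subtype.ext h)
      have hag : ∀ i, π (x i) = σ (x i) := by
        intro i
        have : x i ∈ S := hts ((t.equivFinOfCardEq htcard).symm i).2
        rw [hS, Set.mem_toFinset] at this
        exact this
      exact hne (huniq x hx π hπ σ hσ hag)
    · -- cardinality
      obtain ⟨x₀⟩ : Nonempty (Fin k ↪ Ω) := by
        rw [Function.Embedding.nonempty_iff_card_le, Fintype.card_fin]; exact hk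
      have hbij : Function.Bijective fun g : A => (⟨(g : Equiv.Perm Ω) ∘ x₀,
          (g : Equiv.Perm Ω).injective.comp x₀.injective⟩ : Fin k ↪ Ω) := by
        constructor
        · rintro ⟨g, hg⟩ ⟨g', hg'⟩ h
          have : ∀ i, g (x₀ i) = g' (x₀ i) := fun i => DFunLike.congr_fun h i
          exact Subtype.ext (huniq x₀ x₀.injective g hg g' hg' this)
        · intro y
          obtain ⟨g, ⟨hg, hgy⟩, -⟩ := hST x₀ y x₀.injective y.injective
          exact ⟨⟨g, hg⟩, by ext i; exact hgy i⟩
      have := Fintype.card_of_bijective hbij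
      rw [Fintype.card_coe] at this
      rw [this, hcardEmb]
end

section
/- For any two permutations π, σ of a finite set Ω with distinguished element F, the contracted permutations satisfy hd(π^△, σ^△) ≥ hd(π, σ) − 3. -/
open scoped Classical in
/-- Contraction of `π` relative to the distinguished element `F`:
swap the symbols `F` and `π F` in the image string of `π`. -/
noncomputable def ctr {Ω : Type*} (F : Ω) (π : Equiv.Perm Ω) : Equiv.Perm Ω :=
  π.trans (Equiv.swap F (π F))

/-! `π^△` differs from `π` only at `F` and `π⁻¹ F`, so passing to the contractions can repair
disagreements of `π` and `σ` only at the three points `F`, `π⁻¹ F`, `σ⁻¹ F`. -/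

theorem hd_le_hd_add_ncard {Ω : Type*} [Finite Ω] {π σ π' σ' : Equiv.Perm Ω} {s : Set Ω}
    (h : ∀ x ∉ s, π x = π' x ∧ σ x = σ' x) : hd π σ ≤ hd π' σ' + s.ncard := by
  have hsub : {x | π x ≠ σ x} ⊆ {x | π' x ≠ σ' x} ∪ s := by
    intro x hx
    by_cases hxs : x ∈ s
    · exact Or.inr hxs
    · obtain ⟨hπ, hσ⟩ := h x hxs
      exact Or.inl (by simpa [hπ, hσ] using hx)
  calc hd π σ ≤ ({x | π' x ≠ σ' x} ∪ s).ncard := Set.ncard_le_ncard hsub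
    _ ≤ hd π' σ' + s.ncard := Set.ncard_union_le _ _

theorem ctr_apply_of_ne {Ω : Type*} {F x : Ω} (π : Equiv.Perm Ω) (hx : x ≠ F)
    (hx' : x ≠ π.symm F) : ctr F π x = π x := by
  classical
  exact Equiv.swap_apply_of_ne_of_ne (fun h => hx' (π.eq_symm_apply.mpr h)) (π.injective.ne hx)

theorem ncard_triple_le {α : Type*} (a b c : α) : ({a, b, c} : Set α).ncard ≤ 3 :=
  calc ({a, b, c} : Set α).ncard ≤ ({b, c} : Set α).ncard + 1 := Set.ncard_insert_le _ _
    _ ≤ ({c} : Set α).ncard + 1 + 1 := by gcongr; exact Set.ncard_insert_le _ _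
    _ = 3 := by rw [Set.ncard_singleton]

theorem stmt1 {Ω : Type*} [Fintype Ω] (F : Ω) (π σ : Equiv.Perm Ω) :
    hd (ctr F π) (ctr F σ) + 3 ≥ hd π σ := by
  have hagree : ∀ x ∉ ({F, π.symm F, σ.symm F} : Set Ω),
      π x = ctr F π x ∧ σ x = ctr F σ x := by
    intro x hx
    simp only [Set.mem_insert_iff, Set.mem_singleton_iff, not_or] at hx
    exact ⟨(ctr_apply_of_ne π hx.1 hx.2.1).symm, (ctr_apply_of_ne σ hx.1 hx.2.2).symm⟩
  calc hd π σ ≤ hd (ctr F π) (ctr F σ) + ({F, π.symm F, σ.symm F} : Set Ω).ncard :=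
        hd_le_hd_add_ncard hagree
    _ ≤ hd (ctr F π) (ctr F σ) + 3 := by gcongr; exact ncard_triple_le _ _ _
end

section
/- If π and σ are permutations of a finite set with hd(π^△, σ^△) = hd(π, σ) − 3, then the permutation πσ^{-1} contains a 3-cycle in its disjoint cycle decomposition; consequently, if π and σ lie in a finite permutation group G, then 3 divides |G|. -/
theorem Set.disjoint_and_ncard_eq_of_sdiff_eq {α : Type*} [Finite α] {s t u : Set α} {n : ℕ}
    (hst : s \ u = t \ u) (hu : u.ncard ≤ n) (h : t.ncard + n = s.ncard) :
    Disjoint t u ∧ u.ncard = n := by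
  have hs := Set.ncard_inter_add_ncard_sdiff_eq_ncard s u
  have ht := Set.ncard_inter_add_ncard_sdiff_eq_ncard t u
  have hsu : (s ∩ u).ncard ≤ u.ncard := Set.ncard_le_ncard Set.inter_subset_right
  rw [hst] at hs
  have htu : (t ∩ u).ncard = 0 := by omega
  rw [Set.ncard_eq_zero] at htu
  exact ⟨Set.disjoint_iff_inter_eq_empty.mpr htu, by omega⟩

theorem Set.pairwise_ne_of_ncard_triple_eq_three {α : Type*} {x y z : α}
    (h : ({x, y, z} : Set α).ncard = 3) : x ≠ y ∧ x ≠ z ∧ y ≠ z := by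
  have hpair (a b : α) : ({a, b} : Set α).ncard ≤ 2 :=
    (Set.ncard_insert_le a {b}).trans (by rw [Set.ncard_singleton])
  refine ⟨?_, ?_, ?_⟩ <;> rintro rfl <;> simp at h
  all_goals exact absurd h (ne_of_lt (Nat.lt_of_le_of_lt (hpair _ _) (by norm_num)))

open Equiv Equiv.Perm

section ctr

variable {Ω : Type*} (F : Ω) (π σ : Perm Ω)

theorem ctr_apply_of_ne_s2 {x : Ω} (hF : x ≠ F) (hπ : x ≠ π⁻¹ F) : ctr F π x = π x := by
  classical
  refine swap_apply_of_ne_of_ne ?_ (π.injective.ne hF)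
  rwa [Ne, ← π.eq_symm_apply]

theorem ctr_apply_inv_self : ctr F π (π⁻¹ F) = π F := by
  classical
  simp [ctr]

theorem setOf_ne_sdiff_eq_setOf_ctr_ne :
    {x | π x ≠ σ x} \ {F, π⁻¹ F, σ⁻¹ F} = {x | ctr F π x ≠ ctr F σ x} \ {F, π⁻¹ F, σ⁻¹ F} := by
  ext x
  simp only [Set.mem_sdiff, Set.mem_ofPred_eq, Set.mem_insert_iff, Set.mem_singleton_iff, not_or]
  constructor
  all_goals
    rintro ⟨hx, hF, hπ, hσ⟩
    simp_all [ctr_apply_of_ne_s2]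

theorem ctr_eqOn_of_hd_ctr_add_three [Finite Ω] (h : hd (ctr F π) (ctr F σ) + 3 = hd π σ) :
    ({F, π⁻¹ F, σ⁻¹ F} : Set Ω).ncard = 3 ∧ Set.EqOn (ctr F π) (ctr F σ) {F, π⁻¹ F, σ⁻¹ F} := by
  have hle : ({F, π⁻¹ F, σ⁻¹ F} : Set Ω).ncard ≤ 3 := by
    grw [Set.ncard_insert_le, Set.ncard_insert_le, Set.ncard_singleton]
  obtain ⟨hdisj, hcard⟩ :=
    Set.disjoint_and_ncard_eq_of_sdiff_eq (setOf_ne_sdiff_eq_setOf_ctr_ne F π σ) hle h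
  exact ⟨hcard, fun x hx => not_not.mp fun hne => Set.disjoint_left.mp hdisj hne hx⟩

theorem mul_inv_pow_three_apply_of_hd_ctr_add_three [Finite Ω]
    (h : hd (ctr F π) (ctr F σ) + 3 = hd π σ) :
    ((π * σ⁻¹) ^ 3) F = F ∧ (π * σ⁻¹) F ≠ F := by
  obtain ⟨hcard, heq⟩ := ctr_eqOn_of_hd_ctr_add_three F π σ h
  obtain ⟨hFa, hFb, hab⟩ := Set.pairwise_ne_of_ncard_triple_eq_three hcard
  have hσa : σ (π⁻¹ F) = π F := by
    have := heq (by simp : π⁻¹ F ∈ ({F, π⁻¹ F, σ⁻¹ F} : Set Ω))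
    rwa [ctr_apply_inv_self, ctr_apply_of_ne_s2 F σ hFa.symm hab, eq_comm] at this
  have hπb : π (σ⁻¹ F) = σ F := by
    have := heq (by simp : σ⁻¹ F ∈ ({F, π⁻¹ F, σ⁻¹ F} : Set Ω))
    rwa [ctr_apply_inv_self, ctr_apply_of_ne_s2 F π hFb.symm hab.symm] at this
  have hF : (π * σ⁻¹) F = σ F := hπb
  have hσF : (π * σ⁻¹) (σ F) = π F := by simp
  have hπF : (π * σ⁻¹) (π F) = F := by
    rw [Perm.mul_apply, ← hσa]; simp
  refine ⟨by simp only [pow_succ, pow_zero, one_mul, Perm.mul_apply, hF, hσF, hπF], ?_⟩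
  rw [hF, Ne, ← eq_inv_iff_eq]
  exact hFb

end ctr

theorem Equiv.Perm.isThreeCycle_cycleOf {α : Type*} [Fintype α] [DecidableEq α] {f : Perm α}
    {x : α} (h3 : (f ^ 3) x = x) (h1 : f x ≠ x) : (f.cycleOf x).IsThreeCycle := by
  have hc : (f.cycleOf x).IsCycle := (f.isCycle_cycleOf_iff).mpr h1
  have hpow : f.cycleOf x ^ 3 = 1 :=
    hc.pow_eq_one_iff.mpr ⟨x, by rwa [cycleOf_apply_self], by rwa [cycleOf_pow_apply_self]⟩
  rw [← card_support_eq_three_iff, ← hc.orderOf, orderOf_eq_prime hpow hc.ne_one]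

theorem Equiv.Perm.dvd_natCard_of_mem_cycleType {α : Type*} [Fintype α] [DecidableEq α]
    {f : Perm α} {k : ℕ} {G : Subgroup (Perm α)} (hk : k ∈ f.cycleType) (hf : f ∈ G) :
    k ∣ Nat.card G :=
  (dvd_of_mem_cycleType hk).trans (G.orderOf_dvd_natCard hf)

open scoped Classical in
theorem stmt2 {Ω : Type*} [Fintype Ω] (F : Ω) (π σ : Equiv.Perm Ω)
    (h : (hd (ctr F π) (ctr F σ) : ℤ) = (hd π σ : ℤ) - 3) :
    (∃ c ∈ (π * σ⁻¹).cycleFactorsFinset, Equiv.Perm.IsThreeCycle c) ∧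
      ∀ G : Subgroup (Equiv.Perm Ω), π ∈ G → σ ∈ G → 3 ∣ Nat.card G := by
  obtain ⟨h3, h1⟩ := mul_inv_pow_three_apply_of_hd_ctr_add_three F π σ (by omega)
  have hmem : (π * σ⁻¹).cycleOf F ∈ (π * σ⁻¹).cycleFactorsFinset :=
    cycleOf_mem_cycleFactorsFinset_iff.mpr (mem_support.mpr h1)
  have hthree := isThreeCycle_cycleOf h3 h1
  have h3mem : 3 ∈ (π * σ⁻¹).cycleType :=
    Multiset.mem_of_le (cycleType_le_of_mem_cycleFactorsFinset hmem) (by simp [hthree.cycleType])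
  exact ⟨⟨_, hmem, hthree⟩,
    fun G hπ hσ => dvd_natCard_of_mem_cycleType h3mem (G.mul_mem hπ (G.inv_mem hσ))⟩
end

section
/- Let S be a set of permutations of a finite set with pairwise Hamming distance greater than 3. Then the contraction map π ↦ π^△ is injective on S, i.e., |S| = |S^△|. -/
theorem stmt3 {Ω : Type*} [Fintype Ω] (F : Ω) (S : Set (Equiv.Perm Ω))
    (hS : ∀ π ∈ S, ∀ σ ∈ S, π ≠ σ → 3 < hd π σ) :
    Set.InjOn (ctr F) S ∧ (ctr F '' S).ncard = S.ncard := by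
  classical
  have hinj : Set.InjOn (ctr F) S := by
    intro π hπ σ hσ h
    by_contra hne
    have h3 := hS π hπ σ hσ hne
    have hsub : {x | π x ≠ σ x} ⊆
        {(ctr F π)⁻¹ F, (ctr F π)⁻¹ (π F), (ctr F π)⁻¹ (σ F)} := by
      intro x hx
      by_contra hmem
      simp only [Set.mem_insert_iff, Set.mem_singleton_iff, not_or] at hmem
      obtain ⟨h1, h2, h3'⟩ := hmem
      set t := ctr F π x with ht
      have htF : t ≠ F := fun e => h1 (Equiv.Perm.eq_inv_iff_eq.mpr (ht ▸ e))
      have htπ : t ≠ π F := fun e => h2 (Equiv.Perm.eq_inv_iff_eq.mpr (ht ▸ e))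
      have htσ : t ≠ σ F := fun e => h3' (Equiv.Perm.eq_inv_iff_eq.mpr (ht ▸ e))
      have eπ : π x = t := by
        have : Equiv.swap F (π F) t = t := Equiv.swap_apply_of_ne_of_ne htF htπ
        have h2 : t = Equiv.swap F (π F) (π x) := by simp [ht, ctr]
        calc π x = Equiv.swap F (π F) (Equiv.swap F (π F) (π x)) := by simp
          _ = Equiv.swap F (π F) t := by rw [← h2]
          _ = t := this
      have eσ : σ x = t := by
        have hswap : Equiv.swap F (σ F) t = t := Equiv.swap_apply_of_ne_of_ne htF htσ
        have h2 : t = Equiv.swap F (σ F) (σ x) := by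
          rw [ht, h]; simp [ctr]
        calc σ x = Equiv.swap F (σ F) (Equiv.swap F (σ F) (σ x)) := by simp
          _ = Equiv.swap F (σ F) t := by rw [← h2]
          _ = t := hswap
      exact hx (eπ.trans eσ.symm)
    have hle : hd π σ ≤ 3 := by
      have := Set.ncard_le_ncard hsub (Set.toFinite _)
      calc hd π σ ≤ _ := this
        _ ≤ 3 := by
          refine (Set.ncard_insert_le _ _).trans ?_
          have := Set.ncard_insert_le ((ctr F π)⁻¹ (π F))
            {(ctr F π)⁻¹ (σ F)}
          simp [Set.ncard_singleton] at this ⊢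
          omega
    omega
  exact ⟨hinj, Set.ncard_image_of_injOn hinj⟩
end

section
/- Let q be a prime power with q ≡ 1 (mod 3), F ∈ GF(q) the distinguished element, t₁ a root of t² + t + 1 = 0 in GF(q), and π(x) = ax + r an element of AGL(1,q) with π(F) ≠ F. Then π has exactly two neighbors in the contraction graph of AGL(1,q), namely σ₁(x) = a t₁ x + (a − t₁)F + r(1 + t₁) and σ₂(x) = (a/t₁) x + (a − 1/t₁)F + r(1 + 1/t₁). -/
/-!
Write `π x = a x + r` and `σ x = b x + c`. The condition `σ (π⁻¹ F) = π F` is linear in `c` and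
fixes it in terms of `b`; given it, the symmetric condition `π (σ⁻¹ F) = σ F` becomes
`(a² + a b + b²) (π F - F) = 0`. As `π F ≠ F`, the neighbours of `π` correspond to the roots
`b = a t₁` and `b = a / t₁` of `a² + a b + b²`, which are distinct because `3 ≠ 0` in `GF(q)`.
-/

/-- The set of affine permutations `x ↦ a x + b`, `a ≠ 0`, of the field `K`. -/
def AGL (K : Type*) [Field K] : Set (Equiv.Perm K) :=
  {π | ∃ a b : K, a ≠ 0 ∧ ∀ x, π x = a * x + b}

/-- Adjacency in the contraction graph of `AGL(1,q)` with distinguished element `F`. -/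
def AGLAdj {K : Type*} [Field K] (F : K) (π σ : Equiv.Perm K) : Prop :=
  π ∈ AGL K ∧ σ ∈ AGL K ∧ π F ≠ F ∧ σ F ≠ F ∧
    σ (π⁻¹ F) = π F ∧ π (σ⁻¹ F) = σ F

section

variable {K : Type*} [Field K]

def affPerm (a b : K) (ha : a ≠ 0) : Equiv.Perm K :=
  (Equiv.mulLeft₀ a ha).trans (Equiv.addRight b)

@[simp]
lemma affPerm_apply (a b : K) (ha : a ≠ 0) (x : K) : affPerm a b ha x = a * x + b := rfl

lemma Equiv.Perm.inv_apply_eq_of_affine {σ : Equiv.Perm K} {b c : K} (hb : b ≠ 0)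
    (hσ : ∀ x, σ x = b * x + c) (y : K) : σ⁻¹ y = (y - c) / b := by
  rw [Equiv.Perm.inv_eq_iff_eq, hσ, mul_div_cancel₀ _ hb, sub_add_cancel]

lemma apply_inv_apply_eq_iff_of_affine {π σ : Equiv.Perm K} {a r b c : K} (ha : a ≠ 0)
    (hπ : ∀ x, π x = a * x + r) (hσ : ∀ x, σ x = b * x + c) (F : K) :
    σ (π⁻¹ F) = π F ↔ b * (F - r) + c * a = (a * F + r) * a := by
  rw [Equiv.Perm.inv_apply_eq_of_affine ha hπ, hσ, hπ]
  field_simp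

lemma sq_add_mul_add_sq_eq_zero_iff {t : K} (ht : t ^ 2 + t + 1 = 0) (a b : K) :
    a ^ 2 + a * b + b ^ 2 = 0 ↔ b = a * t ∨ b = a * t⁻¹ := by
  have ht0 : t ≠ 0 := by rintro rfl; norm_num at ht
  have hfactor : a ^ 2 + a * b + b ^ 2 = (b - a * t) * (b - a * t⁻¹) := by
    field_simp
    linear_combination (a * b) * ht
  rw [hfactor, mul_eq_zero, sub_eq_zero, sub_eq_zero]

lemma inv_sq_add_inv_add_one_eq_zero {t : K} (ht : t ^ 2 + t + 1 = 0) :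
    t⁻¹ ^ 2 + t⁻¹ + 1 = 0 := by
  have ht0 : t ≠ 0 := by rintro rfl; norm_num at ht
  field_simp
  linear_combination ht

lemma ne_inv_of_sq_add_add_one_eq_zero (h3 : (3 : K) ≠ 0) {t : K} (ht : t ^ 2 + t + 1 = 0) :
    t ≠ t⁻¹ := by
  intro h
  have ht0 : t ≠ 0 := by rintro rfl; norm_num at ht
  have hsq : t * t = 1 := by nth_rw 2 [h]; exact mul_inv_cancel₀ ht0
  have ht2 : t = -2 := by linear_combination ht - hsq
  exact h3 (by linear_combination hsq - (t - 2) * ht2)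

lemma FiniteField.three_ne_zero_of_card_mod_three [Fintype K] (h : Fintype.card K % 3 = 1) :
    (3 : K) ≠ 0 := by
  intro h3
  have hcard := FiniteField.cast_card_eq_zero K
  rw [← Nat.div_add_mod (Fintype.card K) 3, h] at hcard
  push_cast at hcard
  rw [h3, zero_mul, zero_add] at hcard
  exact one_ne_zero hcard

variable {F a r b c : K} {π σ : Equiv.Perm K}

theorem aglAdj_iff_of_affine (ha : a ≠ 0) (hb : b ≠ 0) (hπ : ∀ x, π x = a * x + r)
    (hσ : ∀ x, σ x = b * x + c) (hπF : π F ≠ F) :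
    AGLAdj F π σ ↔ a ^ 2 + a * b + b ^ 2 = 0 ∧ b * (F - r) + c * a = (a * F + r) * a := by
  have hπF' : a * F + r - F ≠ 0 := by rwa [hπ, ← sub_ne_zero] at hπF
  unfold AGLAdj
  rw [apply_inv_apply_eq_iff_of_affine ha hπ hσ, apply_inv_apply_eq_iff_of_affine hb hσ hπ]
  constructor
  · rintro ⟨-, -, -, -, hE, hE'⟩
    have key : (a ^ 2 + a * b + b ^ 2) * (a * F + r - F) = 0 := by
      linear_combination (-a) * hE' - (a + b) * hE
    exact ⟨(mul_eq_zero.mp key).resolve_right hπF', hE⟩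
  · rintro ⟨hab, hE⟩
    have hab' : a + b ≠ 0 := fun h =>
      ha (pow_eq_zero_iff two_ne_zero |>.mp (by linear_combination hab - b * h))
    have hσF : a * (σ F - F) = (a + b) * (π F - F) := by
      rw [hσ, hπ]
      linear_combination hE
    refine ⟨⟨a, r, ha, hπ⟩, ⟨b, c, hb, hσ⟩, hπF, ?_, hE, ?_⟩
    · rw [← sub_ne_zero]
      intro h
      rw [h, mul_zero] at hσF
      exact mul_ne_zero hab' (sub_ne_zero.mpr hπF) hσF.symm
    · apply mul_left_cancel₀ ha
      linear_combination (-(a + b)) * hE - (a * F + r - F) * hab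

theorem aglAdj_affPerm_of_root (ha : a ≠ 0) (hπ : ∀ x, π x = a * x + r) (hπF : π F ≠ F)
    {t : K} (ht : t ^ 2 + t + 1 = 0) (hat : a * t ≠ 0) :
    AGLAdj F π (affPerm (a * t) ((a - t) * F + r * (1 + t)) hat) := by
  rw [aglAdj_iff_of_affine ha hat hπ (affPerm_apply _ _ hat) hπF]
  constructor
  · linear_combination a ^ 2 * ht
  · ring

theorem apply_eq_or_of_aglAdj (ha : a ≠ 0) (hπ : ∀ x, π x = a * x + r) (hπF : π F ≠ F)
    {t : K} (ht : t ^ 2 + t + 1 = 0) (hσ : AGLAdj F π σ) :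
    (∀ x, σ x = a * t * x + ((a - t) * F + r * (1 + t))) ∨
      ∀ x, σ x = a * t⁻¹ * x + ((a - t⁻¹) * F + r * (1 + t⁻¹)) := by
  obtain ⟨b, c, hb, hσb⟩ := hσ.2.1
  obtain ⟨hab, hE⟩ := (aglAdj_iff_of_affine ha hb hπ hσb hπF).mp hσ
  have hc : ∀ s, b = a * s → c = (a - s) * F + r * (1 + s) := by
    rintro s rfl
    exact mul_right_cancel₀ ha (by linear_combination hE)
  rcases (sq_add_mul_add_sq_eq_zero_iff ht a b).mp hab with hbt | hbt
  · exact Or.inl fun x => by rw [hσb, hc t hbt, hbt]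
  · exact Or.inr fun x => by rw [hσb, hc t⁻¹ hbt, hbt]

end

theorem stmt6 {K : Type*} [Field K] [Fintype K] (q : ℕ) (hq : Fintype.card K = q)
    (hq3 : q % 3 = 1) (F : K) (t₁ : K) (ht₁ : t₁ ^ 2 + t₁ + 1 = 0)
    (π : Equiv.Perm K) (a r : K) (ha : a ≠ 0) (hπ : ∀ x, π x = a * x + r)
    (hπF : π F ≠ F) :
    ∃ σ₁ σ₂ : Equiv.Perm K,
      (∀ x, σ₁ x = a * t₁ * x + (a - t₁) * F + r * (1 + t₁)) ∧
      (∀ x, σ₂ x = a / t₁ * x + (a - 1 / t₁) * F + r * (1 + 1 / t₁)) ∧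
      σ₁ ≠ σ₂ ∧ AGLAdj F π σ₁ ∧ AGLAdj F π σ₂ ∧
      ∀ σ : Equiv.Perm K, AGLAdj F π σ → σ = σ₁ ∨ σ = σ₂ := by
  have ht₀ : t₁ ≠ 0 := by rintro rfl; norm_num at ht₁
  have ht₂ := inv_sq_add_inv_add_one_eq_zero ht₁
  have hne := ne_inv_of_sq_add_add_one_eq_zero
    (FiniteField.three_ne_zero_of_card_mod_three (hq ▸ hq3)) ht₁
  have h₁ : a * t₁ ≠ 0 := mul_ne_zero ha ht₀
  have h₂ : a * t₁⁻¹ ≠ 0 := mul_ne_zero ha (inv_ne_zero ht₀)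
  refine ⟨affPerm _ _ h₁, affPerm _ _ h₂, fun x => by simp only [affPerm_apply]; ring,
    fun x => by simp only [affPerm_apply]; ring, ?_, aglAdj_affPerm_of_root ha hπ hπF ht₁ h₁,
    aglAdj_affPerm_of_root ha hπ hπF ht₂ h₂, fun σ hσ => ?_⟩
  · intro h
    have h0 := congrArg (· 0) h
    have h1 := congrArg (· 1) h
    simp only [affPerm_apply] at h0 h1
    exact hne (mul_left_cancel₀ ha (by linear_combination h1 - h0))
  · rcases apply_eq_or_of_aglAdj ha hπ hπF ht₁ hσ with h | h
    exacts [Or.inl (Equiv.ext h), Or.inr (Equiv.ext h)]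
end

section
/- Let q ≡ 1 (mod 3) be an odd prime power, q ≥ 7. Then every connected component of the contraction graph of AGL(1,q) is either an isolated vertex or a cycle of length 6; if instead q is even with q ≡ 1 (mod 3), every non-isolated component is a cycle of length 3. -/
/-- The connected component of `π` in the contraction graph of `AGL(1,q)`. -/
def AGLComp {K : Type*} [Field K] (F : K) (π : Equiv.Perm K) : Set (Equiv.Perm K) :=
  {σ | Relation.ReflTransGen (AGLAdj F) π σ}

/-!
Write `π x = a (x - F) + F + α`. If `α = 0` then `π` fixes `F` and is isolated. Otherwise the
adjacency equations force `c / a` to be a primitive cube root of unity `ω` and `β = (1 + ω) α`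
for the neighbour `x ↦ c (x - F) + F + β`. With `μ = -ω`, a root of `X² - X + 1`, the two
neighbours of `(a, α)` are `(μ² a, μ α)` and `(μ⁻² a, μ⁻¹ α)`, so the component of `(a, α)` is
`{(g² a, g α) | g ∈ ⟨μ⟩}`, a cycle whose length is the order of `μ`: `6` in odd characteristic
and `3` in characteristic `2`.
-/

theorem orderOf_neg_of_odd {R : Type*} [Ring R] {x : R} (hx : Odd (orderOf x)) :
    orderOf (-x) = orderOf (-1 : R) * orderOf x := by
  rw [neg_eq_neg_one_mul, (Commute.neg_one_left x).orderOf_mul_eq_mul_orderOf_of_coprime]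
  exact (Nat.coprime_two_left.mpr hx).coprime_dvd_left
    (orderOf_dvd_of_pow_eq_one (by rw [neg_one_sq]))

namespace Relation

theorem setOf_reflTransGen_eq_image_zpowers {X G : Type*} [Group G] {r : X → X → Prop}
    {f : G → X} {μ : G} (hr : ∀ g y, r (f g) y ↔ y = f (μ * g) ∨ y = f (μ⁻¹ * g)) :
    {y | ReflTransGen r (f 1) y} = f '' Subgroup.zpowers μ := by
  ext y
  constructor
  · intro h
    induction h with
    | refl => exact ⟨1, one_mem _, rfl⟩
    | tail _ hyz ih =>
      obtain ⟨g, hg, rfl⟩ := ih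
      rcases (hr g _).mp hyz with rfl | rfl
      · exact ⟨μ * g, mul_mem (Subgroup.mem_zpowers μ) hg, rfl⟩
      · exact ⟨μ⁻¹ * g, mul_mem (inv_mem (Subgroup.mem_zpowers μ)) hg, rfl⟩
  · rintro ⟨_, ⟨k, rfl⟩, rfl⟩
    show ReflTransGen r (f 1) (f (μ ^ k))
    induction k using Int.induction_on with
    | zero => rw [zpow_zero]
    | succ k ih => exact ih.tail ((hr _ _).mpr (Or.inl (by rw [add_comm, zpow_one_add])))
    | pred k ih =>
      refine ih.tail ((hr _ _).mpr (Or.inr ?_))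
      rw [sub_eq_neg_add, zpow_add, zpow_neg_one]

end Relation

section

variable {K : Type*} [Field K]

lemma sq_add_self_add_one_eq_zero_of_orderOf_eq_three {ω : K} (hω : orderOf ω = 3) :
    ω ^ 2 + ω + 1 = 0 := by
  have hω1 : ω - 1 ≠ 0 := sub_ne_zero.mpr fun h => by simp [h] at hω
  have hω3 := pow_orderOf_eq_one ω
  rw [hω] at hω3
  refine (mul_eq_zero.mp ?_).resolve_left hω1
  linear_combination hω3

def affineAbout (F : K) (a : Kˣ) (α : K) : Equiv.Perm K where
  toFun x := a * (x - F) + F + α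
  invFun y := (a : K)⁻¹ * (y - F - α) + F
  left_inv x := by field_simp; ring
  right_inv y := by field_simp; ring

@[simp] lemma affineAbout_apply (F : K) (a : Kˣ) (α x : K) :
    affineAbout F a α x = a * (x - F) + F + α := rfl

@[simp] lemma affineAbout_inv_apply (F : K) (a : Kˣ) (α y : K) :
    (affineAbout F a α)⁻¹ y = (a : K)⁻¹ * (y - F - α) + F := rfl

lemma affineAbout_mem_AGL (F : K) (a : Kˣ) (α : K) : affineAbout F a α ∈ AGL K :=
  ⟨a, F - a * F + α, a.ne_zero, fun x => by simp only [affineAbout_apply]; ring⟩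

lemma exists_eq_affineAbout_of_mem_AGL {π : Equiv.Perm K} (hπ : π ∈ AGL K) (F : K) :
    ∃ a α, π = affineAbout F a α := by
  obtain ⟨a, b, ha, hπ⟩ := hπ
  exact ⟨Units.mk0 a ha, (a - 1) * F + b, Equiv.ext fun x => by simp [hπ]; ring⟩

lemma affineAbout_inj {F : K} {a c : Kˣ} {α β : K} :
    affineAbout F a α = affineAbout F c β ↔ a = c ∧ α = β := by
  refine ⟨fun h => ?_, fun ⟨hac, hαβ⟩ => hac ▸ hαβ ▸ rfl⟩
  have hF := Equiv.congr_fun h F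
  have hF1 := Equiv.congr_fun h (F + 1)
  simp only [affineAbout_apply, sub_self, mul_zero, zero_add, add_sub_cancel_left, mul_one]
    at hF hF1
  exact ⟨Units.ext (by linear_combination hF1 - hF), by linear_combination hF⟩

lemma aglAdj_affineAbout_iff (F : K) (a c : Kˣ) (α β : K) :
    AGLAdj F (affineAbout F a α) (affineAbout F c β) ↔
      α ≠ 0 ∧ β ≠ 0 ∧ β = (1 + c / a) * α ∧ α = (1 + a / c) * β := by
  simp only [AGLAdj, affineAbout_mem_AGL, affineAbout_apply, affineAbout_inv_apply, sub_self,
    mul_zero, zero_add, ne_eq, add_eq_left, true_and, div_eq_mul_inv]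
  refine and_congr_right fun _ => and_congr_right fun _ => and_congr ?_ ?_ <;>
    constructor <;> intro h <;> linear_combination h

lemma eq_one_add_mul_and_eq_one_add_inv_mul_iff {t α β : K} (ht : t ≠ 0) (hα : α ≠ 0) :
    (β ≠ 0 ∧ β = (1 + t) * α ∧ α = (1 + t⁻¹) * β) ↔ t ^ 2 + t + 1 = 0 ∧ β = (1 + t) * α := by
  constructor
  · rintro ⟨-, hβ, hα'⟩
    rw [hβ] at hα'
    field_simp at hα'
    exact ⟨by linear_combination -hα', hβ⟩
  · rintro ⟨ht2, hβ⟩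
    have h1t : 1 + t = -t ^ 2 := by linear_combination ht2
    refine ⟨?_, hβ, ?_⟩
    · rw [hβ, h1t]; exact mul_ne_zero (neg_ne_zero.mpr (pow_ne_zero 2 ht)) hα
    · rw [hβ]; field_simp; linear_combination -ht2

lemma sq_add_add_one_eq_zero_iff {μ t : K} (hμ : μ ^ 2 - μ + 1 = 0) :
    t ^ 2 + t + 1 = 0 ↔ t = μ ^ 2 ∨ t = μ⁻¹ ^ 2 := by
  have hμ0 : μ ≠ 0 := by rintro rfl; norm_num at hμ
  have hsum : μ ^ 2 + μ⁻¹ ^ 2 = -1 := by field_simp; linear_combination (μ ^ 2 + μ + 1) * hμ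
  have hprod : μ ^ 2 * μ⁻¹ ^ 2 = 1 := by field_simp
  rw [← sub_eq_zero (a := t), ← sub_eq_zero (a := t), ← mul_eq_zero]
  constructor <;> intro h
  · linear_combination h - t * hsum + hprod
  · linear_combination h + t * hsum - hprod

lemma aglAdj_affineAbout_iff_of_root {μ : Kˣ} (hμ : (μ : K) ^ 2 - μ + 1 = 0) (F : K) (a : Kˣ)
    (α : K) (σ : Equiv.Perm K) :
    AGLAdj F (affineAbout F a α) σ ↔ α ≠ 0 ∧
      (σ = affineAbout F (μ ^ 2 * a) (μ * α) ∨ σ = affineAbout F (μ⁻¹ ^ 2 * a) (μ⁻¹ * α)) := by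
  by_cases hσ : σ ∈ AGL K
  swap
  · refine iff_of_false (fun h => hσ h.2.1) ?_
    rintro ⟨-, rfl | rfl⟩ <;> exact hσ (affineAbout_mem_AGL _ _ _)
  obtain ⟨c, β, rfl⟩ := exists_eq_affineAbout_of_mem_AGL hσ F
  have hca : (c : K) / a ≠ 0 := div_ne_zero c.ne_zero a.ne_zero
  have hc (ν : Kˣ) : c = ν * a ↔ (c : K) / a = ν := by
    rw [Units.ext_iff, div_eq_iff a.ne_zero, Units.val_mul]
  have h1 : 1 + (μ : K) ^ 2 = μ := by linear_combination hμ
  have h2 : 1 + (μ : K)⁻¹ ^ 2 = (μ : K)⁻¹ := by field_simp; linear_combination hμ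
  simp only [aglAdj_affineAbout_iff, affineAbout_inj, ← inv_div (c : K), hc,
    Units.val_pow_eq_pow_val, Units.val_inv_eq_inv_val]
  refine and_congr_right fun hα => ?_
  rw [eq_one_add_mul_and_eq_one_add_inv_mul_iff hca hα, sq_add_add_one_eq_zero_iff hμ]
  constructor
  · rintro ⟨ht | ht, hβ⟩ <;> rw [ht] at hβ
    exacts [Or.inl ⟨ht, h1 ▸ hβ⟩, Or.inr ⟨ht, h2 ▸ hβ⟩]
  · rintro (⟨ht, hβ⟩ | ⟨ht, hβ⟩) <;> rw [ht]
    exacts [⟨Or.inl rfl, h1.symm ▸ hβ⟩, ⟨Or.inr rfl, h2.symm ▸ hβ⟩]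

lemma aglComp_eq_singleton_of_apply_eq (F : K) {π : Equiv.Perm K} (hπ : π F = F) :
    AGLComp F π = {π} := by
  ext σ
  refine ⟨fun h => ?_, fun h => h ▸ Relation.ReflTransGen.refl⟩
  induction h with
  | refl => rfl
  | tail _ hadj ih => exact absurd (ih ▸ hπ) hadj.2.2.1

section Cycle

variable {μ : Kˣ} (hμ : (μ : K) ^ 2 - μ + 1 = 0) (F : K) (a : Kˣ) {α : K} (hα : α ≠ 0)
include hμ hα

lemma aglAdj_affineAbout_sq_mul_iff (g : Kˣ) (σ : Equiv.Perm K) :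
    AGLAdj F (affineAbout F (g ^ 2 * a) (g * α)) σ ↔
      σ = affineAbout F ((μ * g) ^ 2 * a) ((μ * g : Kˣ) * α) ∨
        σ = affineAbout F ((μ⁻¹ * g) ^ 2 * a) ((μ⁻¹ * g : Kˣ) * α) := by
  simp only [aglAdj_affineAbout_iff_of_root hμ, mul_ne_zero g.ne_zero hα, ne_eq,
    not_false_eq_true, true_and, mul_pow, mul_assoc, Units.val_mul]

lemma aglComp_affineAbout_eq_image_zpowers :
    AGLComp F (affineAbout F a α) =
      (fun g : Kˣ => affineAbout F (g ^ 2 * a) (g * α)) '' Subgroup.zpowers μ := by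
  rw [← Relation.setOf_reflTransGen_eq_image_zpowers (aglAdj_affineAbout_sq_mul_iff hμ F a hα)]
  simp only [AGLComp, one_pow, one_mul, Units.val_one]

lemma ncard_aglComp_affineAbout :
    (AGLComp F (affineAbout F a α)).ncard = orderOf μ := by
  have hinj : Function.Injective fun g : Kˣ => affineAbout F (g ^ 2 * a) (g * α) :=
    fun g h hgh => Units.ext (mul_right_cancel₀ hα (affineAbout_inj.mp hgh).2)
  rw [aglComp_affineAbout_eq_image_zpowers hμ F a hα, Set.ncard_image_of_injective _ hinj,
    ← Nat.card_coe_set_eq, SetLike.coe_sort_coe, Nat.card_zpowers]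

lemma ncard_setOf_aglAdj_of_mem_aglComp_affineAbout (hμ2 : μ ^ 2 ≠ 1) {σ : Equiv.Perm K}
    (hσ : σ ∈ AGLComp F (affineAbout F a α)) :
    {τ | AGLAdj F σ τ}.ncard = 2 := by
  rw [aglComp_affineAbout_eq_image_zpowers hμ F a hα] at hσ
  obtain ⟨g, -, rfl⟩ := hσ
  simp_rw [aglAdj_affineAbout_sq_mul_iff hμ F a hα g]
  refine Set.ncard_pair fun h => hμ2 ?_
  have hμg : μ * g = μ⁻¹ * g := Units.ext (mul_right_cancel₀ hα (affineAbout_inj.mp h).2)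
  rw [sq, mul_eq_one_iff_eq_inv]
  exact mul_right_cancel hμg

end Cycle

theorem ncard_aglComp_eq_one_or_of_root {μ : Kˣ} (hμ : (μ : K) ^ 2 - μ + 1 = 0) (hμ2 : μ ^ 2 ≠ 1)
    (F : K) {π : Equiv.Perm K} (hπ : π ∈ AGL K) :
    (AGLComp F π).ncard = 1 ∨
      ((AGLComp F π).ncard = orderOf μ ∧ ∀ σ ∈ AGLComp F π, {τ | AGLAdj F σ τ}.ncard = 2) := by
  obtain ⟨a, α, rfl⟩ := exists_eq_affineAbout_of_mem_AGL hπ F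
  rcases eq_or_ne α 0 with rfl | hα
  · left
    rw [aglComp_eq_singleton_of_apply_eq F (by simp), Set.ncard_singleton]
  · exact Or.inr ⟨ncard_aglComp_affineAbout hμ F a hα,
      fun σ => ncard_setOf_aglAdj_of_mem_aglComp_affineAbout hμ F a hα hμ2⟩

end

/-- A connected component with `n` vertices, all of degree 2, is a cycle of length `n`. -/
theorem stmt8 {K : Type*} [Field K] [Fintype K] (q : ℕ) (hq : Fintype.card K = q)
    (hq3 : q % 3 = 1) (F : K) :
    (Odd q → 7 ≤ q → ∀ π ∈ AGL K,
      (AGLComp F π).ncard = 1 ∨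
        ((AGLComp F π).ncard = 6 ∧
          ∀ σ ∈ AGLComp F π, Set.ncard {τ : Equiv.Perm K | AGLAdj F σ τ} = 2)) ∧
    (Even q → ∀ π ∈ AGL K,
      (AGLComp F π).ncard = 1 ∨
        ((AGLComp F π).ncard = 3 ∧
          ∀ σ ∈ AGLComp F π, Set.ncard {τ : Equiv.Perm K | AGLAdj F σ τ} = 2)) := by
  classical
  obtain ⟨ω, hω⟩ :=
    exists_prime_orderOf_dvd_card (G := Kˣ) 3 (by rw [Fintype.card_units, hq]; omega)
  have hωK : orderOf (ω : K) = 3 := orderOf_units.trans hω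
  have hμ : ((-ω : Kˣ) : K) ^ 2 - (-ω : Kˣ) + 1 = 0 := by
    simpa using sq_add_self_add_one_eq_zero_of_orderOf_eq_three hωK
  have hμ2 : (-ω) ^ 2 ≠ 1 := by
    rw [neg_sq, Ne, ← orderOf_dvd_iff_pow_eq_one, hω]; norm_num
  have hord : orderOf (-ω) = orderOf (-1 : K) * 3 := by
    rw [← orderOf_units, Units.val_neg, orderOf_neg_of_odd (hωK ▸ odd_two_mul_add_one 1), hωK]
  have hchar : ringChar K = 2 ↔ Even q := by
    rw [FiniteField.even_card_iff_char_two, hq, Nat.even_iff]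
  refine ⟨fun hodd _ π hπ => ?_, fun heven π hπ => ?_⟩
  · have h6 : orderOf (-ω) = 6 := by
      rw [hord, orderOf_neg_one, if_neg (hchar.not.mpr (Nat.not_even_iff_odd.mpr hodd))]
    rw [← h6]
    exact ncard_aglComp_eq_one_or_of_root hμ hμ2 F hπ
  · have h3 : orderOf (-ω) = 3 := by rw [hord, orderOf_neg_one, if_pos (hchar.mpr heven), one_mul]
    rw [← h3]
    exact ncard_aglComp_eq_one_or_of_root hμ hμ2 F hπ
end

section
/- For an odd prime power q ≡ 1 (mod 3), q ≥ 7, there exists a set of at least (q²−1)/2 permutations of a set of size q−1 whose pairwise Hamming distance is at least q−3; i.e., M(q−1, q−3) ≥ (q²−1)/2. -/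
open Finset

section HammingDistance

variable {Ω : Type*}

theorem hd_self (π : Equiv.Perm Ω) : hd π π = 0 := by
  simp [hd]

theorem hd_permCongr {Ω' : Type*} (e : Ω ≃ Ω') (π σ : Equiv.Perm Ω) :
    hd (e.permCongr π) (e.permCongr σ) = hd π σ := by
  have : {y | e.permCongr π y ≠ e.permCongr σ y} = e '' {x | π x ≠ σ x} := by
    ext y
    simp [Equiv.image_eq_preimage_symm]
  rw [hd, hd, this, Set.ncard_image_of_injective _ e.injective]

theorem hd_add_card_agree [Fintype Ω] [DecidableEq Ω] (π σ : Equiv.Perm Ω) :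
    hd π σ + #{x | π x = σ x} = Fintype.card Ω := by
  rw [hd, Set.ncard_eq_toFinset_card', Set.toFinset_ofPred, add_comm,
    card_filter_add_card_filter_not, card_univ]

theorem injOn_of_le_hd {ι : Type*} (F : ι → Equiv.Perm Ω) {s : Set ι} {d : ℕ} (hpos : 0 < d)
    (h : ∀ i ∈ s, ∀ j ∈ s, i ≠ j → d ≤ hd (F i) (F j)) : s.InjOn F := by
  intro i hi j hj hij
  by_contra hne
  have := h i hi j hj hne
  rw [hij, hd_self] at this
  omega

end HammingDistance

theorem exists_finset_two_mul_card_eq_of_neg_notMem {R : Type*} [Ring R] [NoZeroDivisors R]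
    [Fintype R] (h2 : (2 : R) ≠ 0) :
    ∃ Q : Finset R, 2 * #Q = Fintype.card R - 1 ∧ ∀ x ∈ Q, -x ∉ Q := by
  classical
  let e := Fintype.equivFin R
  set Q : Finset R := {x | e x < e (-x)}
  have hneg_ne : ∀ x : R, x ≠ 0 → e x ≠ e (-x) := fun x hx h => by
    have : 2 * x = 0 := two_mul x ▸ eq_neg_iff_add_eq_zero.mp (e.injective h)
    exact hx ((mul_eq_zero.mp this).resolve_left h2)
  have hsplit : univ.erase 0 = Q ∪ Q.map (Equiv.neg R).toEmbedding := by
    ext x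
    simp only [mem_erase, mem_univ, and_true, mem_union, mem_map_equiv, Q, mem_filter,
      true_and, Equiv.neg_symm, Equiv.neg_apply, neg_neg]
    refine ⟨fun hx => lt_or_gt_of_ne (hneg_ne x hx), ?_⟩
    rintro (h | h) rfl <;> simp at h
  have hdisj : Disjoint Q (Q.map (Equiv.neg R).toEmbedding) := by
    simp only [disjoint_left, mem_map_equiv, Q, mem_filter, mem_univ, true_and, Equiv.neg_symm,
      Equiv.neg_apply, neg_neg]
    exact fun _ h => h.asymm
  refine ⟨Q, ?_, fun x hx hnx => ?_⟩
  · rw [← card_univ, ← card_erase_of_mem (mem_univ 0), hsplit, card_union_of_disjoint hdisj,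
      card_map, two_mul]
  · simp only [Q, mem_filter, mem_univ, true_and, neg_neg] at hx hnx
    exact hx.asymm hnx

theorem eq_neg_of_root_of_root {K : Type*} [Field K] {a b c d u v : K} (ha : a ≠ 0) (hc : c ≠ 0)
    (hu : u ≠ 0) (hv : v ≠ 0) (hu₁ : a * u + b = 0) (hu₂ : b = c * u + d)
    (hv₁ : c * v + d = 0) (hv₂ : a * v + b = d) :
    b ≠ 0 ∧ d ≠ 0 ∧ c * d = -(a * b) := by
  have hb₀ : b ≠ 0 := fun hb => hu (by simpa [hb, ha] using hu₁)
  have hd₀ : d ≠ 0 := fun hd => hv (by simpa [hd, hc] using hv₁)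
  have E₁ : a * d = b * (a + c) := by linear_combination (-a) * hu₂ - c * hu₁
  have E₂ : b * c = d * (a + c) := by linear_combination c * hv₂ - a * hv₁
  have hac : a ^ 2 + a * c + c ^ 2 = 0 := by
    apply mul_left_cancel₀ (mul_ne_zero hb₀ hd₀)
    linear_combination (-(b * c)) * E₁ - (b * (a + c)) * E₂
  refine ⟨hb₀, hd₀, mul_left_cancel₀ ha ?_⟩
  linear_combination c * E₁ + b * hac

section AffineSwap

variable {K : Type*} [Field K] [DecidableEq K]

def affineSwap (a : Kˣ) (b : K) : Equiv.Perm K :=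
  Equiv.swap 0 b * (Equiv.addRight b * Units.mulLeft a)

theorem affineSwap_zero (a : Kˣ) (b : K) : affineSwap a b 0 = 0 := by
  simp [affineSwap]

theorem affineSwap_apply_of_ne_zero (a : Kˣ) (b : K) {x : K} (hx : x ≠ 0) :
    affineSwap a b x = if a * x + b = 0 then b else a * x + b := by
  have : a * x + b ≠ b := by simpa using hx
  simp [affineSwap, Equiv.swap_apply_def, this]

theorem affineSwap_eq_affineSwap_cases {a c : Kˣ} {b d x : K} (hx : x ≠ 0)
    (h : affineSwap a b x = affineSwap c d x) :
    a * x + b = c * x + d ∨ (a * x + b = 0 ∧ b = c * x + d) ∨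
      (c * x + d = 0 ∧ a * x + b = d) := by
  rw [affineSwap_apply_of_ne_zero a b hx, affineSwap_apply_of_ne_zero c d hx] at h
  split_ifs at h with h₁ h₂ h₂
  · exact Or.inl (h₁.trans h₂.symm)
  · exact Or.inr (Or.inl ⟨h₁, h⟩)
  · exact Or.inr (Or.inr ⟨h₂, h⟩)
  · exact Or.inl h

theorem card_le_two_of_affineSwap_eq {a c : Kˣ} {b d : K} (hne : (a, b) ≠ (c, d))
    (hbd : b ≠ 0 → d ≠ 0 → c * d ≠ -(a * b)) {E : Finset K}
    (hE : ∀ x ∈ E, x ≠ 0 ∧ affineSwap a b x = affineSwap c d x) : #E ≤ 2 := by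
  set E₁ := E.filter fun x => a * x + b = c * x + d
  set E₂ := E.filter fun x => a * x + b = 0 ∧ b = c * x + d
  set E₃ := E.filter fun x => c * x + d = 0 ∧ a * x + b = d
  have hcover : E ⊆ E₁ ∪ E₂ ∪ E₃ := fun x hx => by
    have := affineSwap_eq_affineSwap_cases (hE x hx).1 (hE x hx).2
    simp only [mem_union, E₁, E₂, E₃, mem_filter]
    tauto
  have h₁ : #E₁ ≤ 1 := card_le_one.2 fun x hx y hy => by
    simp only [E₁, mem_filter] at hx hy
    by_contra hxy
    have hac : (a : K) = c :=
      sub_eq_zero.mp ((mul_eq_zero.mp (by linear_combination hx.2 - hy.2 :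
        ((a : K) - c) * (x - y) = 0)).resolve_right (sub_ne_zero.mpr hxy))
    exact hne (Prod.ext (Units.ext hac) (by linear_combination hx.2 - x * hac))
  have h₂ : #E₂ ≤ 1 := card_le_one.2 fun x hx y hy => by
    simp only [E₂, mem_filter] at hx hy
    exact mul_left_cancel₀ a.ne_zero (by linear_combination hx.2.1 - hy.2.1)
  have h₃ : #E₃ ≤ 1 := card_le_one.2 fun x hx y hy => by
    simp only [E₃, mem_filter] at hx hy
    exact mul_left_cancel₀ c.ne_zero (by linear_combination hx.2.1 - hy.2.1)
  have hempty : E₂ = ∅ ∨ E₃ = ∅ := by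
    by_contra! h
    obtain ⟨⟨u, hu⟩, v, hv⟩ := h
    simp only [E₂, E₃, mem_filter] at hu hv
    obtain ⟨hb₀, hd₀, hcd⟩ := eq_neg_of_root_of_root a.ne_zero c.ne_zero (hE u hu.1).1
      (hE v hv.1).1 hu.2.1 hu.2.2 hv.2.1 hv.2.2
    exact hbd hb₀ hd₀ hcd
  calc #E ≤ #(E₁ ∪ E₂ ∪ E₃) := card_le_card hcover
    _ ≤ #E₁ + #E₂ + #E₃ := (card_union_le _ _).trans (by gcongr; exact card_union_le _ _)
    _ ≤ 2 := by rcases hempty with h | h <;> simp only [h, card_empty] <;> omega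

end AffineSwap

section NonzeroPoints

variable {K : Type*} [Field K] [DecidableEq K]

def affineSwapNeZero (a : Kˣ) (b : K) : Equiv.Perm {x : K // x ≠ 0} :=
  (affineSwap a b).subtypePerm fun _ => (affineSwap a b).injective.ne_iff' (affineSwap_zero a b)

theorem le_hd_affineSwapNeZero [Fintype K] {a c : Kˣ} {b d : K} (hne : (a, b) ≠ (c, d))
    (hbd : b ≠ 0 → d ≠ 0 → c * d ≠ -(a * b)) :
    Fintype.card K - 3 ≤ hd (affineSwapNeZero a b) (affineSwapNeZero c d) := by
  have hcard : Fintype.card {x : K // x ≠ 0} = Fintype.card K - 1 := Set.card_ne_eq 0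
  have hagree : #{x | affineSwapNeZero a b x = affineSwapNeZero c d x} ≤ 2 := by
    rw [← card_map (Function.Embedding.subtype _)]
    refine card_le_two_of_affineSwap_eq hne hbd fun _ hmem => ?_
    obtain ⟨⟨x, hx₀⟩, hx, rfl⟩ := mem_map.mp hmem
    simp only [mem_filter, mem_univ, true_and, affineSwapNeZero, Equiv.Perm.subtypePerm_apply,
      Subtype.mk.injEq] at hx
    exact ⟨hx₀, hx⟩
  have := hd_add_card_agree (affineSwapNeZero a b) (affineSwapNeZero c d)
  omega

end NonzeroPoints

theorem exists_perm_code_of_two_ne_zero (K : Type*) [Field K] [Fintype K] {q : ℕ}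
    (hq : Fintype.card K = q) (h2 : (2 : K) ≠ 0) (hq4 : 4 ≤ q) :
    ∃ A : Finset (Equiv.Perm (Fin (q - 1))),
      (∀ π ∈ A, ∀ σ ∈ A, π ≠ σ → q - 3 ≤ hd π σ) ∧ (q ^ 2 - 1) / 2 ≤ #A := by
  classical
  subst hq
  obtain ⟨Q, hQcard, hQneg⟩ := exists_finset_two_mul_card_eq_of_neg_notMem h2
  let e : {x : K // x ≠ 0} ≃ Fin (Fintype.card K - 1) :=
    Fintype.equivFinOfCardEq (Set.card_ne_eq 0)
  -- indexed by `(a, a * b)`, so that the exceptional pairs `c * d = -(a * b)` become `z = -y`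
  let F : Kˣ × K → Equiv.Perm (Fin (Fintype.card K - 1)) :=
    fun p => e.permCongr (affineSwapNeZero p.1 (p.2 / p.1))
  let S : Finset (Kˣ × K) := univ ×ˢ insert 0 Q
  have hdist : ∀ i ∈ S, ∀ j ∈ S, i ≠ j → Fintype.card K - 3 ≤ hd (F i) (F j) := by
    rintro ⟨a, y⟩ hi ⟨c, z⟩ hj hij
    simp only [S, mem_product, mem_univ, true_and, mem_insert] at hi hj
    rw [hd_permCongr]
    refine le_hd_affineSwapNeZero (fun h => hij ?_) fun hy hz hzy => ?_
    · simp only [Prod.mk.injEq] at h ⊢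
      obtain ⟨rfl, h⟩ := h
      exact ⟨rfl, (div_left_inj' a.ne_zero).mp h⟩
    · rw [mul_div_cancel₀ _ a.ne_zero, mul_div_cancel₀ _ c.ne_zero] at hzy
      have hy' : y ≠ 0 := fun h => hy (by simp [h])
      have hz' : z ≠ 0 := fun h => hz (by simp [h])
      exact hQneg y (hi.resolve_left hy') (hzy ▸ hj.resolve_left hz')
  refine ⟨S.image F, ?_, ?_⟩
  · simp only [mem_image]
    rintro _ ⟨i, hi, rfl⟩ _ ⟨j, hj, rfl⟩ hij
    exact hdist i hi j hj fun h => hij (h ▸ rfl)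
  · rw [card_image_of_injOn (injOn_of_le_hd F (by omega) hdist), card_product, card_univ,
      Fintype.card_units, card_insert_of_notMem fun h => hQneg 0 h (by simpa using h)]
    obtain ⟨m, hm⟩ : ∃ m, Fintype.card K = 2 * m + 1 := ⟨#Q, by omega⟩
    rw [hm, show #Q = m by omega,
      show (2 * m + 1) ^ 2 - 1 = 2 * (2 * m * (m + 1)) by ring_nf; omega,
      Nat.mul_div_cancel_left _ two_pos, Nat.add_sub_cancel]

theorem stmt9_general (q : ℕ) (hq : IsPrimePow q) (hodd : Odd q)
    (hq7 : 7 ≤ q) :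
    ∃ A : Finset (Equiv.Perm (Fin (q - 1))),
      (∀ π ∈ A, ∀ σ ∈ A, π ≠ σ → q - 3 ≤ hd π σ) ∧ (q ^ 2 - 1) / 2 ≤ A.card := by
  obtain ⟨p, k, hp, hk, hpk⟩ := hq
  have := Fact.mk hp.nat_prime
  let := Fintype.ofFinite (GaloisField p k)
  have hcard : Fintype.card (GaloisField p k) = q := by
    rw [← Nat.card_eq_fintype_card, GaloisField.card p k hk.ne', hpk]
  have h2 : (2 : GaloisField p k) ≠ 0 := Ring.two_ne_zero fun hchar => by
    have := Nat.odd_iff.mp hodd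
    rw [FiniteField.even_card_iff_char_two, hcard] at hchar
    omega
  exact exists_perm_code_of_two_ne_zero _ hcard h2 (by omega)

theorem stmt9 (q : ℕ) (hq : IsPrimePow q) (hodd : Odd q) (hq3 : q % 3 = 1)
    (hq7 : 7 ≤ q) :
    ∃ A : Finset (Equiv.Perm (Fin (q - 1))),
      (∀ π ∈ A, ∀ σ ∈ A, π ≠ σ → q - 3 ≤ hd π σ) ∧ (q ^ 2 - 1) / 2 ≤ A.card :=
  stmt9_general q hq hodd hq7
end

section
/- Let q be an odd prime power with q ≡ 1 (mod 3), q ≥ 13, and let π(x) = a + r/(x−i) and σ(x) = b + r/(x−j) be distinct elements of PGL(2,q) with (b−a)(j−i) = r, r ≠ 0. Then π and σ agree at exactly two points of GF(q) ∪ {∞}, namely x = (1/2)[i(1+√−3) + j(1−√−3)] and x = (1/2)[i(1−√−3) + j(1+√−3)], where √−3 is a square root of −3 in GF(q). -/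
/-!
Away from the poles, `a + r/(x - i) = b + r/(x - j)` clears to
`(b - a)(x - i)(x - j) = r (i - j)`, and the relation `(b - a)(j - i) = r` turns this into the
quadratic `(x - i)(x - j) + (j - i)² = x² - (i + j) x + (i² - i j + j²) = 0`, whose discriminant
is `-3 (i - j)²`; its roots are the two given points. The poles and `∞` never agree since
`a ≠ b` and `i ≠ j`. Finally `q ≡ 1` modulo `2` and `3` makes `2` and `3` invertible in `GF(q)`
(as `q = 0` there), so the root formula makes sense and `√-3 ≠ 0` separates the two roots.
-/

open OnePoint
open scoped Classical

/-- The map `x ↦ k + r/(x - i)` on `K ∪ {∞}`, with `f ∞ = k` and `f i = ∞`. -/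
noncomputable def pform {K : Type*} [Field K] (k r i : K) (x : OnePoint K) : OnePoint K :=
  Option.elim x ((k : OnePoint K))
    (fun y => if y = i then ∞ else ((k + r / (y - i) : K) : OnePoint K))

theorem FiniteField.natCast_ne_zero_of_card_mod_eq_one {K : Type*} [Field K] [Fintype K]
    {n : ℕ} (h : Fintype.card K % n = 1) : (n : K) ≠ 0 := by
  intro hn
  have hcard := FiniteField.cast_card_eq_zero K
  rw [← Nat.div_add_mod (Fintype.card K) n, h] at hcard
  simp [hn] at hcard

section pform

variable {K : Type*} [Field K]

@[simp]
theorem pform_infty (k r i : K) : pform k r i ∞ = k := rfl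

@[simp]
theorem pform_self (k r i : K) : pform k r i i = ∞ := if_pos rfl

theorem pform_coe_of_ne {k r i y : K} (hy : y ≠ i) : pform k r i y = ↑(k + r / (y - i)) :=
  if_neg hy

theorem add_div_sub_eq_add_div_sub_iff {a b r i j y : K} (hab : a ≠ b)
    (hrel : (b - a) * (j - i) = r) (hyi : y ≠ i) (hyj : y ≠ j) :
    a + r / (y - i) = b + r / (y - j) ↔ (y - i) * (y - j) + (j - i) ^ 2 = 0 := by
  have hyi' : y - i ≠ 0 := sub_ne_zero.mpr hyi
  have hyj' : y - j ≠ 0 := sub_ne_zero.mpr hyj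
  have hba : b - a ≠ 0 := sub_ne_zero.mpr hab.symm
  have cleared : a + r / (y - i) = b + r / (y - j) ↔
      (b - a) * ((y - i) * (y - j) + (j - i) ^ 2) = 0 := by
    rw [← sub_eq_zero, ← hrel]
    constructor <;> intro h
    · field_simp at h
      linear_combination -h
    · field_simp
      linear_combination -h
  rw [cleared, mul_eq_zero, or_iff_right hba]

theorem pform_coe_eq_pform_coe_iff {a b r i j : K} (hr : r ≠ 0)
    (hrel : (b - a) * (j - i) = r) (y : K) :
    pform a r i y = pform b r j y ↔ (y - i) * (y - j) + (j - i) ^ 2 = 0 := by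
  have hab : a ≠ b := by rintro rfl; simp [← hrel] at hr
  have hij : i ≠ j := by rintro rfl; simp [← hrel] at hr
  have hji : (j - i) ^ 2 ≠ 0 := pow_ne_zero 2 (sub_ne_zero.mpr hij.symm)
  by_cases hyi : y = i
  · subst hyi
    simp [pform_coe_of_ne hij, hji]
  by_cases hyj : y = j
  · subst hyj
    simp [pform_coe_of_ne hyi, hji]
  rw [pform_coe_of_ne hyi, pform_coe_of_ne hyj, coe_eq_coe,
    add_div_sub_eq_add_div_sub_iff hab hrel hyi hyj]

theorem setOf_pform_eq_pform {a b r i j x₁ x₂ : K} (hr : r ≠ 0)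
    (hrel : (b - a) * (j - i) = r) (hsum : x₁ + x₂ = i + j)
    (hprod : x₁ * x₂ = i ^ 2 - i * j + j ^ 2) :
    {x | pform a r i x = pform b r j x} = {(x₁ : OnePoint K), (x₂ : OnePoint K)} := by
  have hab : a ≠ b := by rintro rfl; simp [← hrel] at hr
  ext x
  induction x using OnePoint.rec with
  | infty => simp [hab]
  | coe y =>
    have vieta : (y - i) * (y - j) + (j - i) ^ 2 = (y - x₁) * (y - x₂) := by
      linear_combination y * hsum - hprod
    simp only [Set.mem_ofPred_eq, Set.mem_insert_iff, Set.mem_singleton_iff, coe_eq_coe,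
      pform_coe_eq_pform_coe_iff hr hrel, vieta, mul_eq_zero, sub_eq_zero]

end pform

theorem stmt13_general {K : Type*} [Field K] [Fintype K] (q : ℕ) (hq : Fintype.card K = q)
    (hodd : Odd q) (hq3 : q % 3 = 1)
    (π σ : Equiv.Perm (OnePoint K)) (a r i b j t : K) (hr : r ≠ 0)
    (ht : t ^ 2 = -3)
    (hπ : ∀ x, π x = pform a r i x) (hσ : ∀ x, σ x = pform b r j x)
    (hrel : (b - a) * (j - i) = r) :
    (1 / 2 * (i * (1 + t) + j * (1 - t)) : K) ≠ 1 / 2 * (i * (1 - t) + j * (1 + t)) ∧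
      {x : OnePoint K | π x = σ x} =
        {((1 / 2 * (i * (1 + t) + j * (1 - t)) : K) : OnePoint K),
         ((1 / 2 * (i * (1 - t) + j * (1 + t)) : K) : OnePoint K)} := by
  have h2 : (2 : K) ≠ 0 := by
    exact_mod_cast FiniteField.natCast_ne_zero_of_card_mod_eq_one (hq ▸ Nat.odd_iff.mp hodd)
  have h3 : (3 : K) ≠ 0 := by
    exact_mod_cast FiniteField.natCast_ne_zero_of_card_mod_eq_one (n := 3) (hq ▸ hq3)
  have ht0 : t ≠ 0 := by rintro rfl; exact h3 (by linear_combination ht)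
  have hij : i - j ≠ 0 := sub_ne_zero.mpr (by rintro rfl; simp [← hrel] at hr)
  refine ⟨fun h ↦ mul_ne_zero (mul_ne_zero h2 ht0) hij ?_, ?_⟩
  · field_simp at h
    linear_combination h
  simp only [hπ, hσ]
  refine setOf_pform_eq_pform hr hrel ?_ ?_
  · field_simp; ring
  · field_simp; linear_combination (-(i - j) ^ 2) * ht

theorem stmt13 {K : Type*} [Field K] [Fintype K] (q : ℕ) (hq : Fintype.card K = q)
    (hodd : Odd q) (hq3 : q % 3 = 1) (hq13 : 13 ≤ q)
    (π σ : Equiv.Perm (OnePoint K)) (a r i b j t : K) (hr : r ≠ 0)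
    (ht : t ^ 2 = -3)
    (hπ : ∀ x, π x = pform a r i x) (hσ : ∀ x, σ x = pform b r j x)
    (hπσ : π ≠ σ) (hrel : (b - a) * (j - i) = r) :
    (1 / 2 * (i * (1 + t) + j * (1 - t)) : K) ≠ 1 / 2 * (i * (1 - t) + j * (1 + t)) ∧
      {x : OnePoint K | π x = σ x} =
        {((1 / 2 * (i * (1 + t) + j * (1 - t)) : K) : OnePoint K),
         ((1 / 2 * (i * (1 - t) + j * (1 + t)) : K) : OnePoint K)} :=
  stmt13_general q hq hodd hq3 π σ a r i b j t hr ht hπ hσ hrel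
end

section
/- Let q ≡ 1 (mod 3) be an odd prime power, q ≥ 13, and consider the graph on GF(q) × GF(q) with (i,a) adjacent to (j,b) iff (b−a)(j−i) = 1. Then for every vertex v, the subgraph induced on the neighborhood of v is 2-regular (a disjoint union of cycles). -/
/-- The component of the contraction graph of `PGL(2,q)` corresponding to the
parameter `r`: vertices `(i,a)` stand for the maps `x ↦ a + r/(x-i)`, and
`(i,a)`, `(j,b)` are adjacent iff `(b-a)(j-i) = r`. -/
def pglGraph (K : Type*) [Field K] (r : K) : SimpleGraph (K × K) where
  Adj v w := v ≠ w ∧ (w.2 - v.2) * (w.1 - v.1) = r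
  symm := ⟨by
    intro v w h
    exact ⟨h.1.symm, by linear_combination h.2⟩⟩
  loopless := ⟨fun v h => h.1 rfl⟩

/-!
Write `d = j - i` for adjacent vertices `(i,a)`, `(j,b)`. A vertex `(i + x, a + r/x)` adjacent to
`(i,a)` is also adjacent to `(j,b)` exactly when `x² - d x + d² = 0`, i.e. `x = d ζ` with
`ζ² - ζ + 1 = 0`. When `q ≡ 1 (mod 3)` there is a cube root of unity `ω ≠ 1`, and the roots of
`ζ² - ζ + 1 = (ζ + ω)(ζ + ω²)` are the two distinct elements `-ω`, `-ω²`.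
-/

section CubeRoots

variable {K : Type*} [Field K]

theorem exists_pow_three_eq_one_ne_one [Fintype K] (hK : Fintype.card K % 3 = 1) :
    ∃ ω : K, ω ^ 3 = 1 ∧ ω ≠ 1 := by
  classical
  have : Fact (Nat.Prime 3) := ⟨Nat.prime_three⟩
  have h3 : 3 ∣ Fintype.card Kˣ := by rw [Fintype.card_units]; omega
  obtain ⟨ω, hω⟩ := exists_prime_orderOf_dvd_card 3 h3
  have hpow : ω ^ 3 = 1 := hω ▸ pow_orderOf_eq_one ω
  refine ⟨ω, by rw [← Units.val_pow_eq_pow_val, hpow, Units.val_one], fun h => ?_⟩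
  rw [Units.val_eq_one.mp h, orderOf_one] at hω
  omega

theorem setOf_sq_sub_self_add_one_eq_zero {ω : K} (h3 : ω ^ 3 = 1) (h1 : ω ≠ 1) :
    {ζ : K | ζ ^ 2 - ζ + 1 = 0} = {-ω, -ω ^ 2} := by
  have hω : ω ^ 2 + ω + 1 = 0 := by
    have : (ω - 1) * (ω ^ 2 + ω + 1) = 0 := by linear_combination h3
    exact (mul_eq_zero.mp this).resolve_left (sub_ne_zero.mpr h1)
  ext ζ
  have hfac : ζ ^ 2 - ζ + 1 = (ζ + ω) * (ζ + ω ^ 2) := by linear_combination -ζ * hω - h3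
  simp only [Set.mem_ofPred_eq, Set.mem_insert_iff, Set.mem_singleton_iff]
  rw [hfac, mul_eq_zero, add_eq_zero_iff_eq_neg, add_eq_zero_iff_eq_neg]

theorem ncard_setOf_sq_sub_self_add_one_eq_zero {ω : K} (h3 : ω ^ 3 = 1) (h1 : ω ≠ 1) :
    {ζ : K | ζ ^ 2 - ζ + 1 = 0}.ncard = 2 := by
  rw [setOf_sq_sub_self_add_one_eq_zero h3 h1]
  refine Set.ncard_pair fun h => ?_
  have hω0 : ω ≠ 0 := by rintro rfl; norm_num at h3
  have : ω * (ω - 1) = 0 := by linear_combination h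
  exact (mul_eq_zero.mp this).elim hω0 (sub_ne_zero.mpr h1)

end CubeRoots

namespace pglGraph

variable {K : Type*} [Field K] {r : K}

theorem adj_iff (hr : r ≠ 0) {v w : K × K} :
    (pglGraph K r).Adj v w ↔ (w.2 - v.2) * (w.1 - v.1) = r := by
  refine ⟨And.right, fun h => ⟨?_, h⟩⟩
  rintro rfl
  exact hr (by simpa using h.symm)

theorem fst_sub_fst_ne_zero (hr : r ≠ 0) {v w : K × K} (hvw : (pglGraph K r).Adj v w) :
    w.1 - v.1 ≠ 0 :=
  right_ne_zero_of_mul (((adj_iff hr).mp hvw).trans_ne hr)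

theorem mem_commonNeighbors_iff (hr : r ≠ 0) {u v w : K × K} (hvw : (pglGraph K r).Adj v w) :
    u ∈ (pglGraph K r).commonNeighbors v w ↔
      (u.2 - v.2) * (u.1 - v.1) = r ∧
        (u.1 - v.1) ^ 2 - (w.1 - v.1) * (u.1 - v.1) + (w.1 - v.1) ^ 2 = 0 := by
  obtain ⟨i, a⟩ := v
  obtain ⟨j, b⟩ := w
  obtain ⟨k, c⟩ := u
  have hd : j - i ≠ 0 := fst_sub_fst_ne_zero hr hvw
  rw [SimpleGraph.mem_commonNeighbors, adj_iff hr, adj_iff hr]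
  rw [adj_iff hr] at hvw
  refine and_congr_right fun hu => ?_
  have hx : k - i ≠ 0 := right_ne_zero_of_mul (hu.trans_ne hr)
  -- both sides say `r (x² - d x + d²) = 0`, after multiplying out by `x d ≠ 0`
  constructor
  · intro h
    refine (mul_eq_zero.mp ?_).resolve_left hr
    linear_combination -((k - i) * (j - i)) * h + ((k - i) * (j - i) - (j - i) ^ 2) * hu
      + ((k - i) * (j - i) - (k - i) ^ 2) * hvw
  · intro h
    refine mul_right_cancel₀ (mul_ne_zero hx hd) ?_
    linear_combination -r * h + ((k - i) * (j - i) - (j - i) ^ 2) * hu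
      + ((k - i) * (j - i) - (k - i) ^ 2) * hvw

theorem commonNeighbors_eq_image (hr : r ≠ 0) {v w : K × K} (hvw : (pglGraph K r).Adj v w) :
    (pglGraph K r).commonNeighbors v w =
      (fun ζ => (v.1 + (w.1 - v.1) * ζ, v.2 + r / ((w.1 - v.1) * ζ))) ''
        {ζ | ζ ^ 2 - ζ + 1 = 0} := by
  have hd := fst_sub_fst_ne_zero hr hvw
  ext u
  rw [mem_commonNeighbors_iff hr hvw]
  constructor
  · rintro ⟨hu, hroot⟩
    have hx : u.1 - v.1 ≠ 0 := right_ne_zero_of_mul (hu.trans_ne hr)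
    refine ⟨(u.1 - v.1) / (w.1 - v.1), ?_, ?_⟩
    · rw [Set.mem_ofPred_eq]
      field_simp
      linear_combination hroot
    · dsimp only
      rw [mul_div_cancel₀ _ hd, ← hu, mul_div_cancel_right₀ _ hx]
      ext <;> ring
  · rintro ⟨ζ, hζ, rfl⟩
    rw [Set.mem_ofPred_eq] at hζ
    have hζ0 : ζ ≠ 0 := by rintro rfl; norm_num at hζ
    refine ⟨by field_simp; ring, by linear_combination (w.1 - v.1) ^ 2 * hζ⟩

theorem ncard_commonNeighbors (hr : r ≠ 0) {v w : K × K} (hvw : (pglGraph K r).Adj v w) :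
    ((pglGraph K r).commonNeighbors v w).ncard = {ζ : K | ζ ^ 2 - ζ + 1 = 0}.ncard := by
  have hd := fst_sub_fst_ne_zero hr hvw
  rw [commonNeighbors_eq_image hr hvw]
  refine Set.ncard_image_of_injective _ fun ζ ξ h => ?_
  simpa [hd] using congrArg Prod.fst h

end pglGraph

theorem stmt15_general {K : Type*} [Field K] [Fintype K] (q : ℕ) (hq : Fintype.card K = q)
    (hq3 : q % 3 = 1) :
    ∀ v w : K × K, w ∈ (pglGraph K 1).neighborSet v →
      ((pglGraph K 1).neighborSet v ∩ (pglGraph K 1).neighborSet w).ncard = 2 := by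
  intro v w hvw
  obtain ⟨ω, hω3, hω1⟩ := exists_pow_three_eq_one_ne_one (hq ▸ hq3)
  exact (pglGraph.ncard_commonNeighbors one_ne_zero hvw).trans
    (ncard_setOf_sq_sub_self_add_one_eq_zero hω3 hω1)

theorem stmt15 {K : Type*} [Field K] [Fintype K] (q : ℕ) (hq : Fintype.card K = q)
    (hodd : Odd q) (hq3 : q % 3 = 1) (hq13 : 13 ≤ q) :
    ∀ v w : K × K, w ∈ (pglGraph K 1).neighborSet v →
      ((pglGraph K 1).neighborSet v ∩ (pglGraph K 1).neighborSet w).ncard = 2 :=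
  stmt15_general q hq hq3
end
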